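/- Every complete atomic type (CAT) formula F is either contradictory (unsatisfiable) or logically equivalent to an equality CAT (EQCAT) formula F′ with FV(F′) = FV(F). -/

import Mathlib

/-!
A CAT `σ` realised by some assignment has equality literals forming an equivalence relation
that its unary and binary literals respect (`IsEqCongruence`); otherwise it is contradictory.
If it is such a congruence, pick a representative `rep v` of each class. Every atom has the
same sign as its image under `rep`, and `e.var v = e.var (rep v)` is forced by the equations
`y = rep y`, so `σ` is equivalent to these equations together with the restriction of `σ` to
the atoms over representatives; the latter is a GCCAT because distinct representatives are
`σ`-unequal.
-/

/-- An environment (model with variable assignment): interprets unary predicate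
symbols from `𝒜`, binary predicate symbols from `ℱ`, and variables from `V`
over the domain `D`. -/
structure Env (𝒜 ℱ V D : Type) where
  un : 𝒜 → D → Prop
  bin : ℱ → D → D → Prop
  var : V → D

variable {𝒜 ℱ V D : Type}

/-- `e.Split e₁ e₂`: the relations of `e` split as a disjoint union into `e₁`
and `e₂`, and the variable assignments agree with those of `e`. -/
def Env.Split (e e₁ e₂ : Env 𝒜 ℱ V D) : Prop :=
  e₁.var = e.var ∧ e₂.var = e.var ∧
  (∀ A d, (e.un A d ↔ (e₁.un A d ∨ e₂.un A d)) ∧ ¬(e₁.un A d ∧ e₂.un A d)) ∧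
  (∀ f d₁ d₂, (e.bin f d₁ d₂ ↔ (e₁.bin f d₁ d₂ ∨ e₂.bin f d₁ d₂)) ∧
      ¬(e₁.bin f d₁ d₂ ∧ e₂.bin f d₁ d₂))

/-- Spatial conjunction of predicates on environments. -/
def spand (P Q : Env 𝒜 ℱ V D → Prop) (e : Env 𝒜 ℱ V D) : Prop :=
  ∃ e₁ e₂, e.Split e₁ e₂ ∧ P e₁ ∧ Q e₂

/-! ## Syntax and semantics of first-order logic with counting quantifiers -/

/-- Counting quantifier specifications: `∃^{=k}` and `∃^{≥k}`. -/
inductive CQ : Type where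
  | exact : ℕ → CQ
  | atLeast : ℕ → CQ
deriving DecidableEq

/-- A counting quantifier specification is satisfied by a cardinality `c`. -/
def CQ.sat : CQ → ℕ → Prop
  | .exact k, c => c = k
  | .atLeast k, c => k ≤ c

/-- `c ∈ C_{k+1}`: `c` is `=i` for some `i ≤ k`, or `≥ k+1`. -/
def CQ.degLE (k : ℕ) : CQ → Prop
  | .exact i => i ≤ k
  | .atLeast i => i = k + 1

/-- Formulas of first-order predicate calculus with equality and counting
quantifiers, over unary symbols `𝒜`, binary symbols `ℱ`, variables `V`. -/
inductive Fml (𝒜 ℱ V : Type) : Type where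
  | un : 𝒜 → V → Fml 𝒜 ℱ V
  | bin : ℱ → V → V → Fml 𝒜 ℱ V
  | eq : V → V → Fml 𝒜 ℱ V
  | fls : Fml 𝒜 ℱ V
  | and : Fml 𝒜 ℱ V → Fml 𝒜 ℱ V → Fml 𝒜 ℱ V
  | or : Fml 𝒜 ℱ V → Fml 𝒜 ℱ V → Fml 𝒜 ℱ V
  | not : Fml 𝒜 ℱ V → Fml 𝒜 ℱ V
  | cnt : CQ → V → Fml 𝒜 ℱ V → Fml 𝒜 ℱ V

/-- Update the value of a variable in an environment. -/
def Env.updVar [DecidableEq V] (e : Env 𝒜 ℱ V D) (v : V) (d : D) : Env 𝒜 ℱ V D :=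
  { e with var := Function.update e.var v d }

/-- Satisfaction of a formula in an environment. -/
def Fml.Sat [DecidableEq V] : Fml 𝒜 ℱ V → Env 𝒜 ℱ V D → Prop
  | .un A v, e => e.un A (e.var v)
  | .bin f v w, e => e.bin f (e.var v) (e.var w)
  | .eq v w, e => e.var v = e.var w
  | .fls, _ => False
  | .and F G, e => F.Sat e ∧ G.Sat e
  | .or F G, e => F.Sat e ∨ G.Sat e
  | .not F, e => ¬ F.Sat e
  | .cnt c v F, e => c.sat {d : D | F.Sat (e.updVar v d)}.ncard

/-- Quantifier depth; each counting quantifier counts as one quantifier. -/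
def Fml.qdepth : Fml 𝒜 ℱ V → ℕ
  | .un _ _ => 0
  | .bin _ _ _ => 0
  | .eq _ _ => 0
  | .fls => 0
  | .and F G => max F.qdepth G.qdepth
  | .or F G => max F.qdepth G.qdepth
  | .not F => F.qdepth
  | .cnt _ _ F => F.qdepth + 1

/-- Free variables of a formula. -/
def Fml.fv [DecidableEq V] : Fml 𝒜 ℱ V → Finset V
  | .un _ v => {v}
  | .bin _ v w => {v, w}
  | .eq v w => {v, w}
  | .fls => ∅
  | .and F G => F.fv ∪ G.fv
  | .or F G => F.fv ∪ G.fv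
  | .not F => F.fv
  | .cnt _ v F => F.fv.erase v

/-- `F.DegLE k`: `F` has counting degree at most `k`, i.e. all counting
quantifiers of `F` are `∃^c` with `c ∈ C_{k+1}`. -/
def Fml.DegLE (k : ℕ) : Fml 𝒜 ℱ V → Prop
  | .un _ _ => True
  | .bin _ _ _ => True
  | .eq _ _ => True
  | .fls => True
  | .and F G => F.DegLE k ∧ G.DegLE k
  | .or F G => F.DegLE k ∧ G.DegLE k
  | .not F => F.DegLE k
  | .cnt c _ F => c.degLE k ∧ F.DegLE k

/-! ## Atomic formulas, complete atomic types -/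

/-- Atomic formulas over unary symbols `𝒜`, binary symbols `ℱ`, variables `V`
(including equality atoms). -/
inductive Atom (𝒜 ℱ V : Type) : Type where
  | un : 𝒜 → V → Atom 𝒜 ℱ V
  | bin : ℱ → V → V → Atom 𝒜 ℱ V
  | eq : V → V → Atom 𝒜 ℱ V
deriving DecidableEq

def Atom.toFml : Atom 𝒜 ℱ V → Fml 𝒜 ℱ V
  | .un A v => .un A v
  | .bin f v w => .bin f v w
  | .eq v w => .eq v w

/-- The variables occurring in an atomic formula. -/
def Atom.varset [DecidableEq V] : Atom 𝒜 ℱ V → Finset V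
  | .un _ v => {v}
  | .bin _ v w => {v, w}
  | .eq v w => {v, w}

/-- Whether an atom is an equality atom. -/
def Atom.isEq : Atom 𝒜 ℱ V → Bool
  | .eq _ _ => true
  | _ => false

def atomEquiv (𝒜 ℱ V : Type) :
    Atom 𝒜 ℱ V ≃ ((𝒜 × V) ⊕ ((ℱ × V × V) ⊕ (V × V))) where
  toFun a := match a with
    | .un A v => Sum.inl (A, v)
    | .bin f v w => Sum.inr (Sum.inl (f, v, w))
    | .eq v w => Sum.inr (Sum.inr (v, w))
  invFun s := match s with
    | Sum.inl (A, v) => .un A v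
    | Sum.inr (Sum.inl (f, v, w)) => .bin f v w
    | Sum.inr (Sum.inr (v, w)) => .eq v w
  left_inv a := by cases a <;> rfl
  right_inv s := by rcases s with ⟨A, v⟩ | ⟨f, v, w⟩ | ⟨v, w⟩ <;> rfl

instance [Fintype 𝒜] [Fintype ℱ] [Fintype V] : Fintype (Atom 𝒜 ℱ V) :=
  Fintype.ofEquiv _ (atomEquiv 𝒜 ℱ V).symm

/-- Conjunction of a list of formulas (empty conjunction is `¬⊥`, i.e. true). -/
def listConj (l : List (Fml 𝒜 ℱ V)) : Fml 𝒜 ℱ V := l.foldr .and (.not .fls)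

/-- Disjunction of a list of formulas (empty disjunction is `⊥`). -/
def listDisj (l : List (Fml 𝒜 ℱ V)) : Fml 𝒜 ℱ V := l.foldr .or .fls

/-- Conjunction of a list of atoms, each taken positively or negatively
according to the sign assignment `σ`. -/
def signedConj (l : List (Atom 𝒜 ℱ V)) (σ : Atom 𝒜 ℱ V → Bool) : Fml 𝒜 ℱ V :=
  listConj (l.map fun a => if σ a then a.toFml else .not a.toFml)

section AtomicTypes

variable [Fintype 𝒜] [DecidableEq 𝒜] [Fintype ℱ] [DecidableEq ℱ]
  [Fintype V] [DecidableEq V]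

/-- The list of all atomic formulas whose variables are among `xs`. -/
noncomputable def atomsOn (𝒜 ℱ : Type) [Fintype 𝒜] [DecidableEq 𝒜] [Fintype ℱ] [DecidableEq ℱ]
    {V : Type} [Fintype V] [DecidableEq V] (xs : Finset V) : List (Atom 𝒜 ℱ V) :=
  (Finset.univ : Finset (Atom 𝒜 ℱ V)).toList.filter fun a => decide (a.varset ⊆ xs)

/-- The complete atomic type (CAT) formula with free variables `{x₁,…,xₙ}`
(the whole of `V`) determined by a sign assignment `σ`: the conjunction
containing, for each atomic formula `C` over `V`, the conjunct `C` if
`σ C = true` and the conjunct `¬C` otherwise. -/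
noncomputable def catFml (σ : Atom 𝒜 ℱ V → Bool) : Fml 𝒜 ℱ V :=
  signedConj (Finset.univ : Finset (Atom 𝒜 ℱ V)).toList σ

/-- The CAT formula over the variable subset `xs` determined by `σ`. -/
noncomputable def gccatFml (xs : Finset V) (σ : Atom 𝒜 ℱ V → Bool) : Fml 𝒜 ℱ V :=
  signedConj (atomsOn 𝒜 ℱ xs) σ

/-- `σ` is a general-case CAT (GCCAT) sign assignment over the variables `xs`:
the conjunct `xᵢ = xⱼ` occurs (positively) iff `i = j`, and (canonically) `σ`
is `false` outside the atoms over `xs`. -/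
noncomputable def gccatSignB (xs : Finset V) (σ : Atom 𝒜 ℱ V → Bool) : Bool :=
  (xs.toList.all fun i => xs.toList.all fun j => σ (.eq i j) == decide (i = j)) &&
  ((Finset.univ : Finset (Atom 𝒜 ℱ V)).toList.all fun a =>
      decide (a.varset ⊆ xs) || !σ a)

/-- `a` is an atom of an `x`-extension: its variables are among `insert x xs`
and `x` actually occurs in it. -/
def isExtAtom (xs : Finset V) (x : V) (a : Atom 𝒜 ℱ V) : Bool :=
  decide (a.varset ⊆ insert x xs) && decide (x ∈ a.varset)

/-- The list of atoms of `x`-extensions of GCCAT formulas over `xs`. -/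
noncomputable def extAtoms (𝒜 ℱ : Type) [Fintype 𝒜] [DecidableEq 𝒜] [Fintype ℱ] [DecidableEq ℱ]
    {V : Type} [Fintype V] [DecidableEq V] (xs : Finset V) (x : V) : List (Atom 𝒜 ℱ V) :=
  (Finset.univ : Finset (Atom 𝒜 ℱ V)).toList.filter (isExtAtom xs x)

/-- The `x`-extension formula determined by a sign assignment `τ`. -/
noncomputable def extFml (xs : Finset V) (x : V) (τ : Atom 𝒜 ℱ V → Bool) : Fml 𝒜 ℱ V :=
  signedConj (extAtoms 𝒜 ℱ xs x) τ

/-- `τ` is the sign assignment of an `x`-extension of a GCCAT formula over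
`xs`: `x = x` positive, `x = xᵢ` and `xᵢ = x` negative, and (canonically) `τ`
is `false` outside extension atoms. -/
noncomputable def extSignB (xs : Finset V) (x : V) (τ : Atom 𝒜 ℱ V → Bool) : Bool :=
  τ (.eq x x) &&
  (xs.toList.all fun v => !τ (.eq x v) && !τ (.eq v x)) &&
  ((Finset.univ : Finset (Atom 𝒜 ℱ V)).toList.all fun a => isExtAtom xs x a || !τ a)

/-- The list of all sign assignments of `x`-extensions over `xs`. -/
noncomputable def extSigns (𝒜 ℱ : Type) [Fintype 𝒜] [DecidableEq 𝒜] [Fintype ℱ] [DecidableEq ℱ]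
    {V : Type} [Fintype V] [DecidableEq V] (xs : Finset V) (x : V) :
    List (Atom 𝒜 ℱ V → Bool) :=
  (Finset.univ : Finset (Atom 𝒜 ℱ V → Bool)).toList.filter (extSignB xs x)

/-- Merge of two sign assignments: the union of their positive literals. -/
def mergeSign (τ₁ τ₂ : Atom 𝒜 ℱ V → Bool) : Atom 𝒜 ℱ V → Bool :=
  fun a => τ₁ a || τ₂ a

end AtomicTypes

/-- `T₁ ⊛ T₂` is defined iff the sets `S(T₁)`, `S(T₂)` of positive
non-equality literals are disjoint. -/
def MergeOK (τ₁ τ₂ : Atom 𝒜 ℱ V → Bool) : Prop :=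
  ∀ a : Atom 𝒜 ℱ V, a.isEq = false → ¬(τ₁ a = true ∧ τ₂ a = true)

/-- The equality CAT (EQCAT) formula determined by: a set `xs` of variables
(the `xᵢ`'s, whose complement is the set of `yⱼ`'s), a map `ι` assigning to
each `y ∉ xs` the variable `x_{i_y} ∈ xs` of its equality conjunct, and a
GCCAT sign assignment `σ` over `xs`:
`⋀_{y ∉ xs} y = ι y  ∧  (GCCAT formula of σ over xs)`. -/
noncomputable def eqcatFml {𝒜 ℱ : Type}
    [Fintype 𝒜] [DecidableEq 𝒜] [Fintype ℱ] [DecidableEq ℱ] {n : ℕ}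
    (xs : Finset (Fin n)) (ι : Fin n → Fin n) (σ : Atom 𝒜 ℱ (Fin n) → Bool) :
    Fml 𝒜 ℱ (Fin n) :=
  (listConj ((((Finset.univ : Finset (Fin n)) \ xs).toList).map fun y =>
      Fml.eq y (ι y))).and (gccatFml xs σ)

/-- The side conditions making `eqcatFml xs ι σ` an EQCAT formula:
every `y ∉ xs` is equated to a variable in `xs`, and `σ` is a GCCAT sign
assignment over `xs`. -/
def IsEqcatData {𝒜 ℱ : Type}
    [Fintype 𝒜] [DecidableEq 𝒜] [Fintype ℱ] [DecidableEq ℱ] {n : ℕ}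
    (xs : Finset (Fin n)) (ι : Fin n → Fin n) (σ : Atom 𝒜 ℱ (Fin n) → Bool) : Prop :=
  (∀ y, y ∉ xs → ι y ∈ xs) ∧ gccatSignB xs σ = true


section Conjunctions

variable [DecidableEq V]

theorem listConj_sat_iff (l : List (Fml 𝒜 ℱ V)) (e : Env 𝒜 ℱ V D) :
    (listConj l).Sat e ↔ ∀ F ∈ l, F.Sat e := by
  induction l with
  | nil => simp [listConj, Fml.Sat]
  | cons F l ih => simp [listConj, Fml.Sat, ← ih]

theorem signedConj_sat_iff (l : List (Atom 𝒜 ℱ V)) (σ : Atom 𝒜 ℱ V → Bool)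
    (e : Env 𝒜 ℱ V D) :
    (signedConj l σ).Sat e ↔ ∀ a ∈ l, (a.toFml.Sat e ↔ σ a = true) := by
  simp only [signedConj, listConj_sat_iff, List.forall_mem_map]
  refine forall₂_congr fun a _ => ?_
  cases σ a <;> simp [Fml.Sat]

theorem fv_subset_listConj_fv {l : List (Fml 𝒜 ℱ V)} {F : Fml 𝒜 ℱ V} (hF : F ∈ l) :
    F.fv ⊆ (listConj l).fv := by
  induction l with
  | nil => cases hF
  | cons G l ih =>
    simp only [listConj, List.foldr_cons, Fml.fv] at ih ⊢
    rcases List.mem_cons.mp hF with rfl | hF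
    · exact Finset.subset_union_left
    · exact (ih hF).trans Finset.subset_union_right

theorem Atom.fv_toFml (a : Atom 𝒜 ℱ V) : a.toFml.fv = a.varset := by
  cases a <;> rfl

theorem varset_subset_signedConj_fv {l : List (Atom 𝒜 ℱ V)} {a : Atom 𝒜 ℱ V} (ha : a ∈ l)
    (σ : Atom 𝒜 ℱ V → Bool) : a.varset ⊆ (signedConj l σ).fv := by
  refine le_of_eq_of_le ?_ (fv_subset_listConj_fv (List.mem_map_of_mem ha))
  cases σ a <;> simp [Fml.fv, Atom.fv_toFml]

end Conjunctions

section CompleteTypes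

variable [Fintype 𝒜] [Fintype ℱ] [Fintype V] [DecidableEq V]

theorem catFml_sat_iff (σ : Atom 𝒜 ℱ V → Bool) (e : Env 𝒜 ℱ V D) :
    (catFml σ).Sat e ↔ ∀ a, (a.toFml.Sat e ↔ σ a = true) := by
  simp [catFml, signedConj_sat_iff]

theorem catFml_fv (σ : Atom 𝒜 ℱ V → Bool) : (catFml σ).fv = Finset.univ :=
  Finset.eq_univ_of_forall fun v =>
    varset_subset_signedConj_fv (Finset.mem_toList.mpr (Finset.mem_univ (.eq v v))) σ
      (by simp [Atom.varset])

variable [DecidableEq 𝒜] [DecidableEq ℱ]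

theorem mem_atomsOn {xs : Finset V} {a : Atom 𝒜 ℱ V} :
    a ∈ atomsOn 𝒜 ℱ xs ↔ a.varset ⊆ xs := by
  simp [atomsOn]

theorem gccatFml_sat_iff (xs : Finset V) (σ : Atom 𝒜 ℱ V → Bool) (e : Env 𝒜 ℱ V D) :
    (gccatFml xs σ).Sat e ↔ ∀ a : Atom 𝒜 ℱ V, a.varset ⊆ xs → (a.toFml.Sat e ↔ σ a = true) := by
  simp [gccatFml, signedConj_sat_iff, mem_atomsOn]

end CompleteTypes

section EqcatFormulas

variable {𝒜 ℱ : Type} [Fintype 𝒜] [DecidableEq 𝒜] [Fintype ℱ] [DecidableEq ℱ] {n : ℕ}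

theorem eqcatFml_sat_iff (xs : Finset (Fin n)) (ι : Fin n → Fin n) (σ : Atom 𝒜 ℱ (Fin n) → Bool)
    (e : Env 𝒜 ℱ (Fin n) D) :
    (eqcatFml xs ι σ).Sat e ↔ (∀ y ∉ xs, e.var y = e.var (ι y)) ∧
      ∀ a : Atom 𝒜 ℱ (Fin n), a.varset ⊆ xs → (a.toFml.Sat e ↔ σ a = true) := by
  simp [eqcatFml, Fml.Sat, listConj_sat_iff, gccatFml_sat_iff]

theorem eqcatFml_fv (xs : Finset (Fin n)) (ι : Fin n → Fin n) (σ : Atom 𝒜 ℱ (Fin n) → Bool) :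
    (eqcatFml xs ι σ).fv = Finset.univ := by
  refine Finset.eq_univ_of_forall fun v => ?_
  simp only [eqcatFml, Fml.fv, Finset.mem_union]
  by_cases hv : v ∈ xs
  · refine Or.inr (varset_subset_signedConj_fv (a := .eq v v) ?_ σ (by simp [Atom.varset]))
    simp [mem_atomsOn, Atom.varset, hv]
  · refine Or.inl (fv_subset_listConj_fv (F := .eq v (ι v)) ?_ (by simp [Fml.fv]))
    simp [hv]

end EqcatFormulas

def Atom.rename (r : V → V) : Atom 𝒜 ℱ V → Atom 𝒜 ℱ V
  | .un A v => .un A (r v)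
  | .bin f v w => .bin f (r v) (r w)
  | .eq v w => .eq (r v) (r w)

section Renaming

variable [DecidableEq V] {r : V → V}

theorem Atom.toFml_sat_rename {e : Env 𝒜 ℱ V D} (hr : ∀ v, e.var (r v) = e.var v)
    (a : Atom 𝒜 ℱ V) : (a.rename r).toFml.Sat e ↔ a.toFml.Sat e := by
  cases a <;> simp [Atom.rename, Atom.toFml, Fml.Sat, hr]

theorem Atom.varset_rename_subset {xs : Finset V} (hr : ∀ v, r v ∈ xs) (a : Atom 𝒜 ℱ V) :
    (a.rename r).varset ⊆ xs := by
  cases a <;> simp [Atom.rename, Atom.varset, Finset.insert_subset_iff, hr]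

end Renaming

def restrictSign [DecidableEq V] (xs : Finset V) (σ : Atom 𝒜 ℱ V → Bool) : Atom 𝒜 ℱ V → Bool :=
  fun a => decide (a.varset ⊆ xs) && σ a

theorem restrictSign_of_subset [DecidableEq V] {xs : Finset V} {σ : Atom 𝒜 ℱ V → Bool}
    {a : Atom 𝒜 ℱ V} (ha : a.varset ⊆ xs) : restrictSign xs σ a = σ a := by
  simp [restrictSign, ha]

theorem gccatSignB_restrictSign [Fintype 𝒜] [Fintype ℱ] [Fintype V] [DecidableEq V]
    {xs : Finset V} {σ : Atom 𝒜 ℱ V → Bool}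
    (hσ : ∀ i ∈ xs, ∀ j ∈ xs, σ (.eq i j) = true ↔ i = j) :
    gccatSignB xs (restrictSign xs σ) = true := by
  simp only [gccatSignB, Bool.and_eq_true, List.all_eq_true, Finset.mem_toList, beq_iff_eq]
  refine ⟨fun i hi j hj => ?_, fun a _ => ?_⟩
  · rw [restrictSign_of_subset (by simp [Atom.varset, Finset.insert_subset_iff, hi, hj]),
      Bool.eq_iff_iff, decide_eq_true_iff]
    exact hσ i hi j hj
  · by_cases ha : a.varset ⊆ xs <;> simp [restrictSign, ha]

structure IsEqCongruence (σ : Atom 𝒜 ℱ V → Bool) : Prop where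
  equivalence : Equivalence fun v w => σ (.eq v w) = true
  un_congr : ∀ A {v w}, σ (.eq v w) = true → σ (.un A v) = σ (.un A w)
  bin_congr : ∀ f {v v' w w'}, σ (.eq v v') = true → σ (.eq w w') = true →
    σ (.bin f v w) = σ (.bin f v' w')

theorem isEqCongruence_of_catFml_sat [Fintype 𝒜] [Fintype ℱ] [Fintype V] [DecidableEq V]
    {σ : Atom 𝒜 ℱ V → Bool} {e : Env 𝒜 ℱ V D} (h : (catFml σ).Sat e) : IsEqCongruence σ := by
  have hσ : ∀ a, σ a = true ↔ a.toFml.Sat e := fun a => ((catFml_sat_iff σ e).1 h a).symm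
  have heq : ∀ v w, σ (.eq v w) = true ↔ e.var v = e.var w := fun v w => hσ (.eq v w)
  refine ⟨⟨fun v => (heq v v).2 rfl, fun h => (heq _ _).2 ((heq _ _).1 h).symm,
    fun h₁ h₂ => (heq _ _).2 (((heq _ _).1 h₁).trans ((heq _ _).1 h₂))⟩, fun A v w h => ?_,
    fun f v v' w w' hv hw => ?_⟩
  · rw [Bool.eq_iff_iff, hσ, hσ]
    simp [Atom.toFml, Fml.Sat, (heq _ _).1 h]
  · rw [Bool.eq_iff_iff, hσ, hσ]
    simp [Atom.toFml, Fml.Sat, (heq _ _).1 hv, (heq _ _).1 hw]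

namespace IsEqCongruence

variable {σ : Atom 𝒜 ℱ V → Bool} (hσ : IsEqCongruence σ)
include hσ

def setoid : Setoid V := ⟨_, hσ.equivalence⟩

noncomputable def rep (v : V) : V := (Quotient.mk hσ.setoid v).out

theorem eq_rep (v : V) : σ (.eq v (hσ.rep v)) = true :=
  hσ.equivalence.symm (Quotient.mk_out (s := hσ.setoid) v)

theorem rep_eq_rep_iff {v w : V} : hσ.rep v = hσ.rep w ↔ σ (.eq v w) = true :=
  Quotient.out_inj.trans Quotient.eq

theorem rep_rep (v : V) : hσ.rep (hσ.rep v) = hσ.rep v :=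
  hσ.rep_eq_rep_iff.2 (hσ.equivalence.symm (hσ.eq_rep v))

theorem sign_rename_rep (a : Atom 𝒜 ℱ V) : σ (a.rename hσ.rep) = σ a := by
  cases a with
  | un A v => exact (hσ.un_congr A (hσ.eq_rep v)).symm
  | bin f v w => exact (hσ.bin_congr f (hσ.eq_rep v) (hσ.eq_rep w)).symm
  | eq v w =>
    rw [Bool.eq_iff_iff]
    simp only [Atom.rename, ← hσ.rep_eq_rep_iff, rep_rep]

variable [Fintype V] [DecidableEq V]

noncomputable def repSet : Finset V := Finset.univ.image hσ.rep

theorem rep_mem_repSet (v : V) : hσ.rep v ∈ hσ.repSet :=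
  Finset.mem_image_of_mem _ (Finset.mem_univ v)

theorem mem_repSet_iff {v : V} : v ∈ hσ.repSet ↔ hσ.rep v = v := by
  simp only [repSet, Finset.mem_image, Finset.mem_univ, true_and]
  exact ⟨fun ⟨w, hw⟩ => hw ▸ hσ.rep_rep w, fun h => ⟨v, h⟩⟩

theorem gccatSignB_repSet [Fintype 𝒜] [Fintype ℱ] :
    gccatSignB hσ.repSet (restrictSign hσ.repSet σ) = true := by
  refine gccatSignB_restrictSign fun i hi j hj => ?_
  rw [← hσ.rep_eq_rep_iff, hσ.mem_repSet_iff.1 hi, hσ.mem_repSet_iff.1 hj]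

end IsEqCongruence

namespace IsEqCongruence

variable {𝒜 ℱ : Type} [Fintype 𝒜] [DecidableEq 𝒜] [Fintype ℱ] [DecidableEq ℱ] {n : ℕ}
  {σ : Atom 𝒜 ℱ (Fin n) → Bool} (hσ : IsEqCongruence σ)

theorem isEqcatData : IsEqcatData hσ.repSet hσ.rep (restrictSign hσ.repSet σ) :=
  ⟨fun y _ => hσ.rep_mem_repSet y, hσ.gccatSignB_repSet⟩

theorem catFml_sat_iff_eqcatFml_sat (e : Env 𝒜 ℱ (Fin n) D) :
    (catFml σ).Sat e ↔ (eqcatFml hσ.repSet hσ.rep (restrictSign hσ.repSet σ)).Sat e := by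
  rw [catFml_sat_iff, eqcatFml_sat_iff]
  constructor
  · intro h
    refine ⟨fun y _ => (h (.eq y (hσ.rep y))).2 (hσ.eq_rep y), fun a ha => ?_⟩
    rw [restrictSign_of_subset ha]
    exact h a
  · rintro ⟨h_ext, h_rep⟩ a
    have var_rep : ∀ v, e.var (hσ.rep v) = e.var v := fun v => by
      by_cases hv : v ∈ hσ.repSet
      · rw [hσ.mem_repSet_iff.1 hv]
      · exact (h_ext v hv).symm
    have hsub := Atom.varset_rename_subset hσ.rep_mem_repSet a
    rw [← Atom.toFml_sat_rename var_rep, h_rep _ hsub, restrictSign_of_subset hsub,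
      hσ.sign_rename_rep]

end IsEqCongruence

/-- Every complete atomic type (CAT) formula is either
contradictory (unsatisfiable over all finite domains), or logically equivalent
to an EQCAT formula with the same free variables `{x₁,…,xₙ}`. -/
theorem CAT_contradictory_or_equiv_EQCAT {𝒜 ℱ : Type}
    [Fintype 𝒜] [DecidableEq 𝒜] [Fintype ℱ] [DecidableEq ℱ] {n : ℕ}
    (σ : Atom 𝒜 ℱ (Fin n) → Bool) :
    (∀ (D : Type) [Finite D] (e : Env 𝒜 ℱ (Fin n) D), ¬ (catFml σ).Sat e) ∨
    (∃ (xs : Finset (Fin n)) (ι : Fin n → Fin n) (σ' : Atom 𝒜 ℱ (Fin n) → Bool),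
      IsEqcatData xs ι σ' ∧
      (eqcatFml xs ι σ').fv = (catFml σ).fv ∧
      ∀ (D : Type) [Finite D] (e : Env 𝒜 ℱ (Fin n) D),
        (catFml σ).Sat e ↔ (eqcatFml xs ι σ').Sat e) := by
  by_cases hσ : IsEqCongruence σ
  · refine Or.inr ⟨hσ.repSet, hσ.rep, restrictSign hσ.repSet σ, hσ.isEqcatData, ?_,
      fun D _ e => hσ.catFml_sat_iff_eqcatFml_sat e⟩
    rw [eqcatFml_fv, catFml_fv]
  · exact Or.inl fun D _ e he => hσ (isEqCongruence_of_catFml_sat he)
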